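/- Let H be a complex inner product space and let D be a linear subspace of H. Let a₁, a₂ : D × D → ℂ be symmetric sesquilinear forms (a_j(u,v) = conj(a_j(v,u)) for all u, v ∈ D) with a₁(u,u) ≤ a₂(u,u) for all u ∈ D. Let μ ∈ ℝ. Suppose F is a finite-dimensional subspace of D with a₂(u,u) ≤ μ‖u‖² for all u ∈ F, and K is a finite-dimensional subspace of D such that a₁(v,w) = μ⟨v,w⟩ for every v ∈ K and every w ∈ D, and F ∩ K = {0}. Define N₁(μ) as the supremum (in ℕ∞) of finrank L over all finite-dimensional subspaces L of D such that a₁(u,u) ≤ μ‖u‖² for all u ∈ L. Then N₁(μ) ≥ finrank F + finrank K. -/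

import Mathlib

/-!
If `v` satisfies `a₁(v, ·) = μ⟪v, ·⟫`, then by symmetry of `a₁` the form `a₁ - μ⟪·,·⟫` takes
the same value at `u + v` as at `u`. Hence `a₁(u,u) ≤ μ‖u‖²` holds on all of `F ⊔ K` as soon as it
holds on `F`, which it does since `a₁ ≤ a₂`. As `F ⊓ K = 0`, the subspace `F ⊔ K` has dimension
`dim F + dim K`, and it is one of the subspaces competing in the supremum defining `N₁(μ)`.
-/

open scoped InnerProductSpace ComplexOrder

/-- The counting quantity `N_a(μ)` for a sesquilinear form `a` on a subspace `D`:
the supremum (in `ℕ∞`) of `finrank L` over all finite-dimensional subspaces `L` of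
`D` on which `a(u,u) ≤ μ‖u‖²`. -/
noncomputable def formCountingFunction {H : Type*} [NormedAddCommGroup H]
    [InnerProductSpace ℂ H] (D : Submodule ℂ H) (a : D →ₗ⋆[ℂ] D →ₗ[ℂ] ℂ) (μ : ℝ) : ℕ∞ :=
  ⨆ (L : {L : Submodule ℂ D // FiniteDimensional ℂ L ∧
      ∀ u ∈ L, a u u ≤ ((μ * ‖((u : D) : H)‖ ^ 2 : ℝ) : ℂ)}),
    (Module.finrank ℂ L.1 : ℕ∞)

namespace LinearMap

variable {𝕜 E : Type*} [RCLike 𝕜] [NormedAddCommGroup E] [InnerProductSpace 𝕜 E]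

theorem apply_add_self_sub_inner_of_apply_eq_inner {a : E →ₗ⋆[𝕜] E →ₗ[𝕜] 𝕜}
    (ha : ∀ u v, a u v = starRingEnd 𝕜 (a v u)) {μ : ℝ} {v : E}
    (hv : ∀ w, a v w = (μ : 𝕜) * ⟪v, w⟫_𝕜) (u : E) :
    a (u + v) (u + v) - μ * ⟪u + v, u + v⟫_𝕜 = a u u - μ * ⟪u, u⟫_𝕜 := by
  have huv : a u v = μ * ⟪u, v⟫_𝕜 := by
    rw [ha, hv, map_mul, RCLike.conj_ofReal, inner_conj_symm]
  simp only [map_add, add_apply, inner_add_left, inner_add_right, huv, hv]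
  ring

theorem apply_add_self_le_iff_of_apply_eq_inner {a : E →ₗ⋆[𝕜] E →ₗ[𝕜] 𝕜}
    (ha : ∀ u v, a u v = starRingEnd 𝕜 (a v u)) {μ : ℝ} {v : E}
    (hv : ∀ w, a v w = (μ : 𝕜) * ⟪v, w⟫_𝕜) (u : E) :
    a (u + v) (u + v) ≤ ((μ * ‖u + v‖ ^ 2 : ℝ) : 𝕜) ↔ a u u ≤ ((μ * ‖u‖ ^ 2 : ℝ) : 𝕜) := by
  have key := apply_add_self_sub_inner_of_apply_eq_inner ha hv u
  simp only [inner_self_eq_norm_sq_to_K] at key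
  rw [← sub_nonpos, ← sub_nonpos (a := a u u)]
  push_cast
  rw [key]

theorem apply_self_le_of_mem_sup {a : E →ₗ⋆[𝕜] E →ₗ[𝕜] 𝕜}
    (ha : ∀ u v, a u v = starRingEnd 𝕜 (a v u)) {μ : ℝ} {F K : Submodule 𝕜 E}
    (hF : ∀ u ∈ F, a u u ≤ ((μ * ‖u‖ ^ 2 : ℝ) : 𝕜))
    (hK : ∀ v ∈ K, ∀ w, a v w = (μ : 𝕜) * ⟪v, w⟫_𝕜) {u : E} (hu : u ∈ F ⊔ K) :
    a u u ≤ ((μ * ‖u‖ ^ 2 : ℝ) : 𝕜) := by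
  obtain ⟨f, hf, k, hk, rfl⟩ := Submodule.mem_sup.mp hu
  exact (apply_add_self_le_iff_of_apply_eq_inner ha (hK k hk) f).mpr (hF f hf)

end LinearMap

theorem Submodule.finrank_sup_of_inf_eq_bot {K V : Type*} [DivisionRing K] [AddCommGroup V]
    [Module K V] {s t : Submodule K V} [FiniteDimensional K s] [FiniteDimensional K t]
    (h : s ⊓ t = ⊥) : Module.finrank K ↥(s ⊔ t) = Module.finrank K s + Module.finrank K t := by
  have := finrank_sup_add_finrank_inf_eq s t
  rwa [h, finrank_bot, add_zero] at this

theorem finrank_le_formCountingFunction {H : Type*} [NormedAddCommGroup H]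
    [InnerProductSpace ℂ H] {D : Submodule ℂ H} {a : D →ₗ⋆[ℂ] D →ₗ[ℂ] ℂ} {μ : ℝ}
    {L : Submodule ℂ D} [FiniteDimensional ℂ L]
    (hL : ∀ u ∈ L, a u u ≤ ((μ * ‖((u : D) : H)‖ ^ 2 : ℝ) : ℂ)) :
    (Module.finrank ℂ L : ℕ∞) ≤ formCountingFunction D a μ :=
  le_iSup (fun L : {L : Submodule ℂ D // FiniteDimensional ℂ L ∧
      ∀ u ∈ L, a u u ≤ ((μ * ‖((u : D) : H)‖ ^ 2 : ℝ) : ℂ)} => (Module.finrank ℂ L.1 : ℕ∞))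
    ⟨L, inferInstance, hL⟩

theorem formCountingFunction_ge_general {H : Type*} [NormedAddCommGroup H]
    [InnerProductSpace ℂ H] (D : Submodule ℂ H)
    (a₁ a₂ : D →ₗ⋆[ℂ] D →ₗ[ℂ] ℂ)
    (hsym₁ : ∀ u v : D, a₁ u v = starRingEnd ℂ (a₁ v u))
    (h12 : ∀ u : D, a₁ u u ≤ a₂ u u)
    (μ : ℝ) (F K : Submodule ℂ D) [FiniteDimensional ℂ F] [FiniteDimensional ℂ K]
    (hF : ∀ u ∈ F, a₂ u u ≤ ((μ * ‖((u : D) : H)‖ ^ 2 : ℝ) : ℂ))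
    (hK : ∀ v ∈ K, ∀ w : D, a₁ v w = (μ : ℂ) * ⟪(v : H), (w : H)⟫_ℂ)
    (hFK : F ⊓ K = ⊥) :
    (Module.finrank ℂ F + Module.finrank ℂ K : ℕ∞) ≤ formCountingFunction D a₁ μ := by
  have hF₁ : ∀ u ∈ F, a₁ u u ≤ ((μ * ‖u‖ ^ 2 : ℝ) : ℂ) := fun u hu => (h12 u).trans (hF u hu)
  calc (Module.finrank ℂ F + Module.finrank ℂ K : ℕ∞)
      = Module.finrank ℂ ↥(F ⊔ K) := by
        rw [Submodule.finrank_sup_of_inf_eq_bot hFK, Nat.cast_add]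
    _ ≤ formCountingFunction D a₁ μ :=
      finrank_le_formCountingFunction fun _ ↦ LinearMap.apply_self_le_of_mem_sup hsym₁ hF₁ hK

/-- let `a₁ ≤ a₂` be symmetric sesquilinear forms on `D`, `μ ∈ ℝ`,
`F` a finite-dimensional subspace with `a₂(u,u) ≤ μ‖u‖²` on `F`, `K` a
finite-dimensional subspace with `a₁(v,w) = μ⟨v,w⟩` for all `v ∈ K`, `w ∈ D`, and
`F ∩ K = {0}`. Then `N₁(μ) ≥ finrank F + finrank K`. -/
theorem formCountingFunction_ge {H : Type*} [NormedAddCommGroup H]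
    [InnerProductSpace ℂ H] (D : Submodule ℂ H)
    (a₁ a₂ : D →ₗ⋆[ℂ] D →ₗ[ℂ] ℂ)
    (hsym₁ : ∀ u v : D, a₁ u v = starRingEnd ℂ (a₁ v u))
    (hsym₂ : ∀ u v : D, a₂ u v = starRingEnd ℂ (a₂ v u))
    (h12 : ∀ u : D, a₁ u u ≤ a₂ u u)
    (μ : ℝ) (F K : Submodule ℂ D) [FiniteDimensional ℂ F] [FiniteDimensional ℂ K]
    (hF : ∀ u ∈ F, a₂ u u ≤ ((μ * ‖((u : D) : H)‖ ^ 2 : ℝ) : ℂ))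
    (hK : ∀ v ∈ K, ∀ w : D, a₁ v w = (μ : ℂ) * ⟪(v : H), (w : H)⟫_ℂ)
    (hFK : F ⊓ K = ⊥) :
    (Module.finrank ℂ F + Module.finrank ℂ K : ℕ∞) ≤ formCountingFunction D a₁ μ :=
  formCountingFunction_ge_general D a₁ a₂ hsym₁ h12 μ F K hF hK hFK
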